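/- arXiv:1202.6320 — 2 statements merged into one kernel-verified Lean document; each statement's English description precedes it below -/
import Mathlib

section
/- Let M be a compact topological space with a finite Borel measure μ of total mass V = μ(M) > 0, let φ₁, φ₂, … : M → ℂ be continuous functions each with ∫_M φₙ dμ = 0 and ∫_M |φₙ|² dμ = 1, and let a₁, a₂, … be positive reals such that Σₙ |φₙ(x)|² aₙ converges uniformly on M. Then for every N ≥ 1 there exists a point (x̄₁, …, x̄_N) ∈ M^N with Σ_{n=1}^∞ |φₙ(x̄₁) + ⋯ + φₙ(x̄_N)|² aₙ ≤ (N/V) · Σ_{n=1}^∞ aₙ. -/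
/-!
Greedy construction by averaging. Given points `x̄₁, …, x̄_k`, put `Sₙ = φₙ(x̄₁) + ⋯ + φₙ(x̄_k)`.
Since `φₙ` has mean zero and unit `L²` norm, the average over `x ∈ M` of `‖Sₙ + φₙ(x)‖²` is
`‖Sₙ‖² + 1/V`, so after weighting by `aₙ` and summing (monotone convergence) some `x` satisfies
`Σₙ ‖Sₙ + φₙ(x)‖² aₙ ≤ Σₙ ‖Sₙ‖² aₙ + (1/V) Σₙ aₙ`; induct on `N`.
Uniform convergence makes `Σₙ ‖φₙ‖² aₙ` continuous, hence integrable, and its integral bounds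
`Σₙ aₙ`, so that the right-hand side is finite.
-/

open MeasureTheory Filter Finset Topology

section Averaging

variable {α : Type*} [MeasurableSpace α] {μ : Measure α}

theorem summable_integral_of_tendsto_sum {f : ℕ → α → ℝ} {F : α → ℝ}
    (hf : ∀ n, Integrable (f n) μ) (hf_nonneg : ∀ n x, 0 ≤ f n x) (hF : Integrable F μ)
    (h_lim : ∀ x, Tendsto (fun s => ∑ n ∈ range s, f n x) atTop (𝓝 (F x))) :
    Summable fun n => ∫ x, f n x ∂μ := by
  refine summable_of_sum_range_le (c := ∫ x, F x ∂μ) (fun n => integral_nonneg (hf_nonneg n))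
    fun s => ?_
  rw [← integral_finsetSum _ fun n _ => hf n]
  refine integral_mono (integrable_finsetSum _ fun n _ => hf n) hF fun x => ?_
  exact (monotone_nat_of_le_succ fun s => by
    simpa [sum_range_succ] using hf_nonneg s x).ge_of_tendsto (h_lim x) s

variable [IsFiniteMeasure μ]

theorem exists_summable_tsum_le_tsum_integral_div (hμ : μ ≠ 0) {f : ℕ → α → ℝ}
    (hf : ∀ n, Integrable (f n) μ) (hf_nonneg : ∀ n x, 0 ≤ f n x)
    (hsum : Summable fun n => ∫ x, f n x ∂μ) :
    ∃ x, Summable (fun n => f n x) ∧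
      ∑' n, f n x ≤ (∑' n, ∫ y, f n y ∂μ) / μ.real Set.univ := by
  have : NeZero μ := ⟨hμ⟩
  have hlint : ∫⁻ x, ∑' n, ENNReal.ofReal (f n x) ∂μ
      = ENNReal.ofReal (∑' n, ∫ y, f n y ∂μ) := by
    rw [lintegral_tsum fun n => (hf n).aemeasurable.ennreal_ofReal,
      ENNReal.ofReal_tsum_of_nonneg (fun n => integral_nonneg (hf_nonneg n)) hsum]
    exact tsum_congr fun n =>
      (ofReal_integral_eq_lintegral_ofReal (hf n) (ae_of_all _ (hf_nonneg n))).symm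
  obtain ⟨x, hx⟩ := exists_le_laverage (f := fun x => ∑' n, ENNReal.ofReal (f n x)) hμ
    (.tsum fun n => (hf n).aemeasurable.ennreal_ofReal)
  rw [laverage_eq, hlint] at hx
  -- `x` was chosen for the `ℝ≥0∞`-valued sum, which is therefore finite at `x`.
  have hsx : Summable fun n => f n x := by
    have hfin : ∑' n, ENNReal.ofReal (f n x) ≠ ⊤ :=
      ne_top_of_le_ne_top (ENNReal.div_ne_top ENNReal.ofReal_ne_top (NeZero.ne _)) hx
    simpa [ENNReal.toReal_ofReal (hf_nonneg _ x)] using ENNReal.summable_toReal hfin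
  refine ⟨x, hsx, ?_⟩
  rw [← ENNReal.ofReal_le_ofReal_iff
      (div_nonneg (tsum_nonneg fun n => integral_nonneg (hf_nonneg n)) measureReal_nonneg),
    ENNReal.ofReal_div_of_pos measureReal_univ_pos,
    ENNReal.ofReal_tsum_of_nonneg (hf_nonneg · x) hsx, measureReal_def,
    ENNReal.ofReal_toReal (measure_ne_top μ _)]
  exact hx

end Averaging

section InnerProductSpace

variable {α E : Type*} [MeasurableSpace α] {μ : Measure α} [IsFiniteMeasure μ]
  [NormedAddCommGroup E] [InnerProductSpace ℝ E] [CompleteSpace E]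

theorem integral_norm_const_add_sq {φ : α → E} (hφ : MemLp φ 2 μ) (hmean : ∫ x, φ x ∂μ = 0)
    (c : E) : ∫ x, ‖c + φ x‖ ^ 2 ∂μ = ‖c‖ ^ 2 * μ.real Set.univ + ∫ x, ‖φ x‖ ^ 2 ∂μ := by
  have hφ_int : Integrable φ μ := hφ.integrable one_le_two
  have hφ_sq : Integrable (fun x => ‖φ x‖ ^ 2) μ := hφ.integrable_norm_pow two_ne_zero
  simp_rw [norm_add_sq_real]
  rw [integral_add (by fun_prop) hφ_sq, integral_add (integrable_const _)
      ((hφ_int.const_inner c).const_mul 2), integral_const_mul, integral_inner hφ_int, hmean,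
    inner_zero_right, integral_const, smul_eq_mul]
  ring

theorem exists_tsum_norm_add_sq_mul_le (hμ : μ ≠ 0) {φ : ℕ → α → E}
    (hφ : ∀ n, MemLp (φ n) 2 μ) (hmean : ∀ n, ∫ x, φ n x ∂μ = 0)
    (hnorm : ∀ n, ∫ x, ‖φ n x‖ ^ 2 ∂μ = 1) {a : ℕ → ℝ} (ha : ∀ n, 0 ≤ a n) (ha_sum : Summable a)
    {c : ℕ → E} (hc : Summable fun n => ‖c n‖ ^ 2 * a n) :
    ∃ x, Summable (fun n => ‖c n + φ n x‖ ^ 2 * a n) ∧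
      ∑' n, ‖c n + φ n x‖ ^ 2 * a n ≤ ∑' n, ‖c n‖ ^ 2 * a n + (∑' n, a n) / μ.real Set.univ := by
  have : NeZero μ := ⟨hμ⟩
  have h_integral (n : ℕ) :
      ∫ x, ‖c n + φ n x‖ ^ 2 * a n ∂μ = ‖c n‖ ^ 2 * a n * μ.real Set.univ + a n := by
    rw [integral_mul_const, integral_norm_const_add_sq (hφ n) (hmean n), hnorm n]
    ring
  have h_integrable : ∀ n, Integrable (fun x => ‖c n + φ n x‖ ^ 2 * a n) μ := fun n =>
    (((memLp_const (c n)).add (hφ n)).integrable_norm_pow two_ne_zero).mul_const (a n)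
  obtain ⟨x, hsx, hx⟩ := exists_summable_tsum_le_tsum_integral_div hμ h_integrable
    (fun n x => mul_nonneg (sq_nonneg _) (ha n))
    (by simpa only [h_integral] using (hc.mul_right _).add ha_sum)
  refine ⟨x, hsx, hx.trans_eq ?_⟩
  rw [tsum_congr h_integral, (hc.mul_right _).tsum_add ha_sum, tsum_mul_right, add_div,
    mul_div_cancel_right₀ _ measureReal_univ_ne_zero]

theorem exists_tuple_tsum_norm_sum_sq_mul_le (hμ : μ ≠ 0) {φ : ℕ → α → E}
    (hφ : ∀ n, MemLp (φ n) 2 μ) (hmean : ∀ n, ∫ x, φ n x ∂μ = 0)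
    (hnorm : ∀ n, ∫ x, ‖φ n x‖ ^ 2 ∂μ = 1) {a : ℕ → ℝ} (ha : ∀ n, 0 ≤ a n) (ha_sum : Summable a)
    (m : ℕ) :
    ∃ p : Fin m → α, Summable (fun n => ‖∑ i, φ n (p i)‖ ^ 2 * a n) ∧
      ∑' n, ‖∑ i, φ n (p i)‖ ^ 2 * a n ≤ m / μ.real Set.univ * ∑' n, a n := by
  induction m with
  | zero => exact ⟨Fin.elim0, by simp⟩
  | succ m ih =>
    obtain ⟨p, hp_sum, hp⟩ := ih
    obtain ⟨x, hx_sum, hx⟩ :=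
      exists_tsum_norm_add_sq_mul_le hμ hφ hmean hnorm ha ha_sum hp_sum
    refine ⟨Fin.snoc p x, ?_⟩
    simp only [Fin.sum_univ_castSucc, Fin.snoc_castSucc, Fin.snoc_last]
    refine ⟨hx_sum, hx.trans ?_⟩
    calc ∑' n, ‖∑ i, φ n (p i)‖ ^ 2 * a n + (∑' n, a n) / μ.real Set.univ
        ≤ m / μ.real Set.univ * ∑' n, a n + (∑' n, a n) / μ.real Set.univ := by gcongr
      _ = (m + 1 : ℕ) / μ.real Set.univ * ∑' n, a n := by push_cast; ring

end InnerProductSpace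

theorem exists_point_tsum_le_general {M : Type*} [TopologicalSpace M] [CompactSpace M]
    [MeasurableSpace M] [BorelSpace M] (μ : Measure M) [IsFiniteMeasure μ]
    (V : ℝ) (hV : V = (μ Set.univ).toReal) (hVpos : 0 < V)
    (φ : ℕ → M → ℂ) (hφ : ∀ n, Continuous (φ n))
    (hmean : ∀ n, ∫ x, φ n x ∂μ = 0) (hnorm : ∀ n, ∫ x, ‖φ n x‖ ^ 2 ∂μ = 1)
    (a : ℕ → ℝ) (ha : ∀ n, 0 < a n)
    (hunif : TendstoUniformly
      (fun s : ℕ => fun x : M => ∑ n ∈ Finset.range s, ‖φ n x‖ ^ 2 * a n)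
      (fun x : M => ∑' n, ‖φ n x‖ ^ 2 * a n) Filter.atTop)
    (N : ℕ) :
    ∃ p : Fin N → M,
      (∑' n, ‖∑ i, φ n (p i)‖ ^ 2 * a n) ≤ ((N : ℝ) / V) * ∑' n, a n := by
  have hμ : μ ≠ 0 := by
    rintro rfl
    simp [hV] at hVpos
  have hφ_memLp : ∀ n, MemLp (φ n) 2 μ := fun n =>
    (hφ n).memLp_of_hasCompactSupport (.of_compactSpace _)
  have hterm_int : ∀ n, Integrable (fun x => ‖φ n x‖ ^ 2 * a n) μ := fun n =>
    ((hφ_memLp n).integrable_norm_pow two_ne_zero).mul_const _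
  have ha_sum : Summable a := by
    have hsum_cont : Continuous fun x => ∑' n, ‖φ n x‖ ^ 2 * a n :=
      hunif.continuous (.of_forall fun s => by fun_prop)
    simpa only [integral_mul_const, hnorm, one_mul] using
      summable_integral_of_tendsto_sum hterm_int (fun n x => mul_nonneg (sq_nonneg _) (ha n).le)
        (hsum_cont.integrable_of_hasCompactSupport (.of_compactSpace _))
        hunif.tendsto_at
  obtain ⟨p, -, hp⟩ := exists_tuple_tsum_norm_sum_sq_mul_le hμ hφ_memLp hmean hnorm
    (fun n => (ha n).le) ha_sum N
  exact ⟨p, hV ▸ hp⟩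

/-- On a compact space `M` with a finite Borel measure `μ` of total mass
`V = μ(M) > 0`, given continuous `φₙ : M → ℂ` with `∫ φₙ = 0`, `∫ ‖φₙ‖² = 1`, and positive
reals `aₙ` with `Σₙ ‖φₙ(x)‖² aₙ` uniformly convergent on `M`, for every `N ≥ 1` there is a
point `(x̄₁, …, x̄_N) ∈ M^N` with `Σₙ ‖φₙ(x̄₁) + ⋯ + φₙ(x̄_N)‖² aₙ ≤ (N/V) · Σₙ aₙ`. -/
theorem exists_point_tsum_le {M : Type*} [TopologicalSpace M] [CompactSpace M]
    [MeasurableSpace M] [BorelSpace M] (μ : Measure M) [IsFiniteMeasure μ]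
    (V : ℝ) (hV : V = (μ Set.univ).toReal) (hVpos : 0 < V)
    (φ : ℕ → M → ℂ) (hφ : ∀ n, Continuous (φ n))
    (hmean : ∀ n, ∫ x, φ n x ∂μ = 0) (hnorm : ∀ n, ∫ x, ‖φ n x‖ ^ 2 ∂μ = 1)
    (a : ℕ → ℝ) (ha : ∀ n, 0 < a n)
    (hsummable : ∀ x : M, Summable fun n => ‖φ n x‖ ^ 2 * a n)
    (hunif : TendstoUniformly
      (fun s : ℕ => fun x : M => ∑ n ∈ Finset.range s, ‖φ n x‖ ^ 2 * a n)
      (fun x : M => ∑' n, ‖φ n x‖ ^ 2 * a n) Filter.atTop)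
    (N : ℕ) (hN : 1 ≤ N) :
    ∃ p : Fin N → M,
      (∑' n, ‖∑ i, φ n (p i)‖ ^ 2 * a n) ≤ ((N : ℝ) / V) * ∑' n, a n :=
  exists_point_tsum_le_general μ V hV hVpos φ hφ hmean hnorm a ha hunif N
end

section
/- Let M be a compact topological space with a finite Borel measure μ of total mass V = μ(M) > 0, let φ₁, φ₂, … : M → ℂ be continuous functions each with ∫_M φₙ dμ = 0 and ∫_M |φₙ|² dμ = 1, and let a₁, a₂, … be positive reals such that Σₙ |φₙ(x)|² aₙ converges uniformly on M. If (p₁, …, p_N) ∈ M^N globally minimizes the function F_N(x₁, …, x_N) = Σ_{n=1}^∞ |φₙ(x₁) + ⋯ + φₙ(x_N)|² aₙ on M^N, then Σ_{n=1}^∞ |φₙ(p₁) + ⋯ + φₙ(p_N)|² aₙ ≤ (N/V) · Σ_{n=1}^∞ aₙ. -/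
open MeasureTheory

/-!
By minimality, `F_N(p)` is at most the average of `F_N` over `M^N` with respect to `μ^N`, a
measure of total mass `V^N`. Expanding `‖∑ i, φₙ(xᵢ)‖²`, the cross terms integrate to zero because
`φₙ` has mean zero, so `∫ ‖∑ i, φₙ(xᵢ)‖² dμ^N = N V^(N-1)` and `∫ F_N dμ^N = N V^(N-1) ∑ aₙ`.
The series `∑ aₙ` converges: it is the integral of `∑ ‖φₙ‖² aₙ`, which is continuous by uniform
convergence, hence bounded on the compact space `M`.
-/

theorem ofReal_norm_sum_sq {ι 𝕜 : Type*} [RCLike 𝕜] (s : Finset ι) (z : ι → 𝕜) :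
    ((‖∑ i ∈ s, z i‖ ^ 2 : ℝ) : 𝕜) = ∑ i ∈ s, ∑ j ∈ s, z i * starRingEnd 𝕜 (z j) := by
  rw [RCLike.ofReal_pow, ← RCLike.mul_conj, map_sum, Finset.sum_mul_sum]

section PiIntegrals

variable {ι M 𝕜 : Type*} [Fintype ι] [RCLike 𝕜]

theorem prod_mulSingle_apply_eval [DecidableEq ι] (i : ι) (g : M → 𝕜) (x : ι → M) :
    ∏ k, (Pi.mulSingle i g : ι → M → 𝕜) k (x k) = g (x i) := by
  rw [Fintype.prod_eq_single i fun k hk => by simp [hk]]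
  simp

variable [MeasurableSpace M] {μ : Measure M}

theorem integral_comp_eval_pi [SigmaFinite μ] (i : ι) (g : M → 𝕜) :
    ∫ x : ι → M, g (x i) ∂Measure.pi (fun _ => μ)
      = μ.real Set.univ ^ (Fintype.card ι - 1) * ∫ y, g y ∂μ := by
  classical
  simp_rw [← prod_mulSingle_apply_eval i g, integral_fintype_prod_eq_prod,
    Fintype.prod_eq_mul_prod_compl i]
  rw [Finset.prod_congr rfl (g := fun _ => (μ.real Set.univ : 𝕜)) fun k hk => ?_]
  · simp [Finset.card_compl, mul_comm]
  · rw [Pi.mulSingle_eq_of_ne (by simpa using hk)]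
    simp [Algebra.smul_def]

theorem integral_mul_comp_eval_pi_of_ne [SigmaFinite μ] {i j : ι} (hij : i ≠ j) {f : M → 𝕜}
    (hf : ∫ y, f y ∂μ = 0) (g : M → 𝕜) :
    ∫ x : ι → M, f (x i) * g (x j) ∂Measure.pi (fun _ => μ) = 0 := by
  classical
  have hprod : ∀ x : ι → M, f (x i) * g (x j)
      = ∏ k, (Pi.mulSingle i f * Pi.mulSingle j g : ι → M → 𝕜) k (x k) := fun x => by
    simp only [Pi.mul_apply, Finset.prod_mul_distrib, prod_mulSingle_apply_eval]
  simp_rw [hprod, integral_fintype_prod_eq_prod]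
  exact Finset.prod_eq_zero (Finset.mem_univ i) (by simp [hij, hf])

variable [IsFiniteMeasure μ] {f : M → 𝕜}

theorem integrable_mul_comp_eval_pi (i j : ι) {g : M → 𝕜} (hf : MemLp f 2 μ)
    (hg : MemLp g 2 μ) :
    Integrable (fun x : ι → M => f (x i) * g (x j)) (Measure.pi (fun _ => μ)) := by
  classical
  rcases eq_or_ne i j with rfl | hij
  · exact integrable_comp_eval (μ := fun _ => μ) (hf.integrable_mul hg)
  have hprod : ∀ x : ι → M, f (x i) * g (x j)
      = ∏ k, (Pi.mulSingle i f * Pi.mulSingle j g : ι → M → 𝕜) k (x k) := fun x => by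
    simp only [Pi.mul_apply, Finset.prod_mul_distrib, prod_mulSingle_apply_eval]
  simp_rw [hprod]
  refine Integrable.fintype_prod fun k => ?_
  rcases eq_or_ne k i with rfl | hki
  · simpa [hij] using hf.integrable one_le_two
  rcases eq_or_ne k j with rfl | hkj
  · simpa [hki] using hg.integrable one_le_two
  simp only [Pi.mul_apply, Pi.mulSingle_eq_of_ne hki, Pi.mulSingle_eq_of_ne hkj, mul_one]
  exact integrable_const (1 : 𝕜)

theorem integrable_norm_sum_comp_eval_sq (hf : MemLp f 2 μ) :
    Integrable (fun x : ι → M => ‖∑ i, f (x i)‖ ^ 2) (Measure.pi (fun _ => μ)) := by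
  have hint : Integrable (fun x : ι → M => ((‖∑ i, f (x i)‖ ^ 2 : ℝ) : 𝕜))
      (Measure.pi (fun _ => μ)) := by
    simp_rw [ofReal_norm_sum_sq]
    exact integrable_finsetSum _ fun i _ => integrable_finsetSum _ fun j _ =>
      integrable_mul_comp_eval_pi i j hf hf.star
  simpa using hint.re

theorem integral_norm_sum_comp_eval_sq (hf : MemLp f 2 μ) (hmean : ∫ y, f y ∂μ = 0) :
    ∫ x : ι → M, ‖∑ i, f (x i)‖ ^ 2 ∂Measure.pi (fun _ => μ)
      = Fintype.card ι * μ.real Set.univ ^ (Fintype.card ι - 1) * ∫ y, ‖f y‖ ^ 2 ∂μ := by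
  apply RCLike.ofReal_injective (K := 𝕜)
  have hint : ∀ i j : ι, Integrable (fun x : ι → M => f (x i) * starRingEnd 𝕜 (f (x j)))
      (Measure.pi (fun _ => μ)) := fun i j => integrable_mul_comp_eval_pi i j hf hf.star
  have hdiag : ∫ y, f y * starRingEnd 𝕜 (f y) ∂μ = ((∫ y, ‖f y‖ ^ 2 ∂μ : ℝ) : 𝕜) := by
    simp_rw [RCLike.mul_conj, ← integral_ofReal, RCLike.ofReal_pow]
  rw [← integral_ofReal]
  simp_rw [ofReal_norm_sum_sq]
  rw [integral_finsetSum _ fun i _ => integrable_finsetSum _ fun j _ => hint i j]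
  simp_rw [integral_finsetSum _ fun j _ => hint _ j]
  refine (Finset.sum_congr rfl fun i _ => Finset.sum_eq_single i
    (fun j _ hji => integral_mul_comp_eval_pi_of_ne hji.symm hmean (starRingEnd 𝕜 ∘ f))
    (by simp)).trans ?_
  simp [integral_comp_eval_pi (g := fun y => f y * starRingEnd 𝕜 (f y)), hdiag, mul_assoc]

end PiIntegrals

section NonnegSeries

variable {α ι : Type*} [MeasurableSpace α] {μ : Measure α}

theorem integrable_tsum_of_nonneg [Countable ι] {f : ι → α → ℝ}
    (hf_nonneg : ∀ n x, 0 ≤ f n x) (hf : ∀ n, Integrable (f n) μ)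
    (hsum : Summable fun n => ∫ x, f n x ∂μ) :
    Integrable (fun x => ∑' n, f n x) μ := by
  have hmeas : ∀ n, AEMeasurable (fun x => ENNReal.ofReal (f n x)) μ :=
    fun n => (hf n).aemeasurable.ennreal_ofReal
  -- holds also where the series diverges: there both sides are junk `0`
  have htoReal : (fun x => ∑' n, f n x) = fun x => (∑' n, ENNReal.ofReal (f n x)).toReal := by
    ext x
    rw [ENNReal.tsum_toReal_eq fun _ => ENNReal.ofReal_ne_top]
    simp only [ENNReal.toReal_ofReal (hf_nonneg _ x)]
  rw [htoReal]
  refine integrable_toReal_of_lintegral_ne_top (AEMeasurable.tsum hmeas) ?_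
  rw [lintegral_tsum hmeas]
  simp_rw [← ofReal_integral_eq_lintegral_ofReal (hf _) (ae_of_all _ (hf_nonneg _)),
    ← ENNReal.ofReal_tsum_of_nonneg (fun n => integral_nonneg (hf_nonneg n)) hsum]
  exact ENNReal.ofReal_ne_top

theorem integral_tsum_of_nonneg [Countable ι] {f : ι → α → ℝ}
    (hf_nonneg : ∀ n x, 0 ≤ f n x) (hf : ∀ n, Integrable (f n) μ)
    (hsum : Summable fun n => ∫ x, f n x ∂μ) :
    ∫ x, ∑' n, f n x ∂μ = ∑' n, ∫ x, f n x ∂μ := by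
  refine (integral_tsum_of_summable_integral_norm hf ?_).symm
  simpa only [Real.norm_of_nonneg (hf_nonneg _ _)] using hsum

theorem hasSum_integral_of_nonneg {f : ℕ → α → ℝ} (hf_nonneg : ∀ n x, 0 ≤ f n x)
    (hf : ∀ n, Integrable (f n) μ) (hsum : ∀ x, Summable fun n => f n x)
    (hint : Integrable (fun x => ∑' n, f n x) μ) :
    HasSum (fun n => ∫ x, f n x ∂μ) (∫ x, ∑' n, f n x ∂μ) := by
  rw [hasSum_iff_tendsto_nat_of_nonneg fun n => integral_nonneg (hf_nonneg n)]
  simp_rw [← integral_finsetSum _ fun n _ => hf n]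
  refine integral_tendsto_of_tendsto_of_monotone (fun s => integrable_finsetSum _ fun n _ => hf n)
    hint (ae_of_all _ fun x => ?_) (ae_of_all _ fun x => (hsum x).hasSum.tendsto_sum_nat)
  exact (Finset.sum_mono_set_of_nonneg (hf_nonneg · x)).comp Finset.range_mono

end NonnegSeries

section WeightedEnergy

variable {ι M 𝕜 : Type*} [Fintype ι] [RCLike 𝕜]

noncomputable def weightedEnergy (φ : ℕ → M → 𝕜) (a : ℕ → ℝ) (x : ι → M) : ℝ :=
  ∑' n, ‖∑ i, φ n (x i)‖ ^ 2 * a n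

variable [MeasurableSpace M] {μ : Measure M} [IsFiniteMeasure μ] {φ : ℕ → M → 𝕜} {a : ℕ → ℝ}

theorem integral_norm_sum_comp_eval_sq_mul (hφ : ∀ n, MemLp (φ n) 2 μ)
    (hmean : ∀ n, ∫ y, φ n y ∂μ = 0) (hnorm : ∀ n, ∫ y, ‖φ n y‖ ^ 2 ∂μ = 1) (n : ℕ) :
    ∫ x : ι → M, ‖∑ i, φ n (x i)‖ ^ 2 * a n ∂Measure.pi (fun _ => μ)
      = Fintype.card ι * μ.real Set.univ ^ (Fintype.card ι - 1) * a n := by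
  rw [integral_mul_const, integral_norm_sum_comp_eval_sq (hφ n) (hmean n), hnorm, mul_one]

theorem integrable_weightedEnergy (hφ : ∀ n, MemLp (φ n) 2 μ)
    (hmean : ∀ n, ∫ y, φ n y ∂μ = 0) (hnorm : ∀ n, ∫ y, ‖φ n y‖ ^ 2 ∂μ = 1)
    (ha : ∀ n, 0 ≤ a n) (ha_sum : Summable a) :
    Integrable (weightedEnergy (ι := ι) φ a) (Measure.pi (fun _ => μ)) :=
  integrable_tsum_of_nonneg (fun n x => mul_nonneg (sq_nonneg _) (ha n))
    (fun n => (integrable_norm_sum_comp_eval_sq (hφ n)).mul_const _)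
    (by simpa only [integral_norm_sum_comp_eval_sq_mul hφ hmean hnorm] using ha_sum.mul_left _)

theorem integral_weightedEnergy (hφ : ∀ n, MemLp (φ n) 2 μ)
    (hmean : ∀ n, ∫ y, φ n y ∂μ = 0) (hnorm : ∀ n, ∫ y, ‖φ n y‖ ^ 2 ∂μ = 1)
    (ha : ∀ n, 0 ≤ a n) (ha_sum : Summable a) :
    ∫ x : ι → M, weightedEnergy φ a x ∂Measure.pi (fun _ => μ)
      = Fintype.card ι * μ.real Set.univ ^ (Fintype.card ι - 1) * ∑' n, a n := by
  unfold weightedEnergy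
  rw [integral_tsum_of_nonneg (fun n x => mul_nonneg (sq_nonneg _) (ha n))
    (fun n => (integrable_norm_sum_comp_eval_sq (hφ n)).mul_const _)
    (by simpa only [integral_norm_sum_comp_eval_sq_mul hφ hmean hnorm] using ha_sum.mul_left _)]
  simp_rw [integral_norm_sum_comp_eval_sq_mul hφ hmean hnorm, tsum_mul_left]

end WeightedEnergy

theorem tsum_le_of_min_general {M : Type*} [TopologicalSpace M] [CompactSpace M]
    [MeasurableSpace M] [BorelSpace M] (μ : Measure M) [IsFiniteMeasure μ]
    (V : ℝ) (hV : V = (μ Set.univ).toReal) (hVpos : 0 < V)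
    (φ : ℕ → M → ℂ) (hφ : ∀ n, Continuous (φ n))
    (hmean : ∀ n, ∫ x, φ n x ∂μ = 0) (hnorm : ∀ n, ∫ x, ‖φ n x‖ ^ 2 ∂μ = 1)
    (a : ℕ → ℝ) (ha : ∀ n, 0 < a n)
    (hsummable : ∀ x : M, Summable fun n => ‖φ n x‖ ^ 2 * a n)
    (hunif : TendstoUniformly
      (fun s : ℕ => fun x : M => ∑ n ∈ Finset.range s, ‖φ n x‖ ^ 2 * a n)
      (fun x : M => ∑' n, ‖φ n x‖ ^ 2 * a n) Filter.atTop)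
    (N : ℕ) (p : Fin N → M)
    (hmin : ∀ x : Fin N → M,
      (∑' n, ‖∑ i, φ n (p i)‖ ^ 2 * a n) ≤ ∑' n, ‖∑ i, φ n (x i)‖ ^ 2 * a n) :
    (∑' n, ‖∑ i, φ n (p i)‖ ^ 2 * a n) ≤ ((N : ℝ) / V) * ∑' n, a n := by
  have hφL2 : ∀ n, MemLp (φ n) 2 μ := fun n =>
    ((hφ n).memLp_top_of_hasCompactSupport (.of_compactSpace _) μ).mono_exponent le_top
  have ha_nonneg : ∀ n, 0 ≤ a n := fun n => (ha n).le
  have ha_sum : Summable a := by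
    have hG : Continuous fun x => ∑' n, ‖φ n x‖ ^ 2 * a n :=
      hunif.continuous (Filter.Frequently.of_forall fun s => by fun_prop)
    have h := hasSum_integral_of_nonneg (fun n x => mul_nonneg (sq_nonneg _) (ha_nonneg n))
      (fun n => ((hφL2 n).integrable_norm_pow two_ne_zero).mul_const (a n)) hsummable
      (hG.integrable_of_hasCompactSupport (.of_compactSpace _))
    simp_rw [integral_mul_const, hnorm, one_mul] at h
    exact h.summable
  have hmass : (Measure.pi fun _ : Fin N => μ).real Set.univ = V ^ N := by
    simp [measureReal_def, Measure.pi_univ, hV]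
  have havg := integral_mono (integrable_const _)
    (integrable_weightedEnergy hφL2 hmean hnorm ha_nonneg ha_sum) hmin
  rw [integral_const, smul_eq_mul, hmass, integral_weightedEnergy hφL2 hmean hnorm ha_nonneg ha_sum,
    measureReal_def, ← hV, Fintype.card_fin] at havg
  refine le_of_mul_le_mul_left (havg.trans_eq ?_) (pow_pos hVpos N)
  rcases N with _ | N
  · simp
  · rw [Nat.add_sub_cancel, pow_succ]
    field_simp

/-- On a compact space `M` with a finite Borel measure `μ` of total mass
`V = μ(M) > 0`, given continuous `φₙ : M → ℂ` with `∫ φₙ = 0`, `∫ ‖φₙ‖² = 1`, and positive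
reals `aₙ` with `Σₙ ‖φₙ(x)‖² aₙ` uniformly convergent on `M`: if `(p₁, …, p_N) ∈ M^N`
globally minimizes `F_N(x₁, …, x_N) = Σₙ ‖φₙ(x₁) + ⋯ + φₙ(x_N)‖² aₙ`, then
`Σₙ ‖φₙ(p₁) + ⋯ + φₙ(p_N)‖² aₙ ≤ (N/V) · Σₙ aₙ`. -/
theorem tsum_le_of_min {M : Type*} [TopologicalSpace M] [CompactSpace M]
    [MeasurableSpace M] [BorelSpace M] (μ : Measure M) [IsFiniteMeasure μ]
    (V : ℝ) (hV : V = (μ Set.univ).toReal) (hVpos : 0 < V)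
    (φ : ℕ → M → ℂ) (hφ : ∀ n, Continuous (φ n))
    (hmean : ∀ n, ∫ x, φ n x ∂μ = 0) (hnorm : ∀ n, ∫ x, ‖φ n x‖ ^ 2 ∂μ = 1)
    (a : ℕ → ℝ) (ha : ∀ n, 0 < a n)
    (hsummable : ∀ x : M, Summable fun n => ‖φ n x‖ ^ 2 * a n)
    (hunif : TendstoUniformly
      (fun s : ℕ => fun x : M => ∑ n ∈ Finset.range s, ‖φ n x‖ ^ 2 * a n)
      (fun x : M => ∑' n, ‖φ n x‖ ^ 2 * a n) Filter.atTop)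
    (N : ℕ) (hN : 1 ≤ N) (p : Fin N → M)
    (hmin : ∀ x : Fin N → M,
      (∑' n, ‖∑ i, φ n (p i)‖ ^ 2 * a n) ≤ ∑' n, ‖∑ i, φ n (x i)‖ ^ 2 * a n) :
    (∑' n, ‖∑ i, φ n (p i)‖ ^ 2 * a n) ≤ ((N : ℝ) / V) * ∑' n, a n :=
  tsum_le_of_min_general μ V hV hVpos φ hφ hmean hnorm a ha hsummable hunif N p hmin
end
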